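/- Let α be a k-algebra automorphism of A and ⟪-,-⟫ a double bracket on A associated with the α-twisted outer bimodule structure. Let α₃ = id⊗id⊗α on A⊗A⊗A and define the α-twisted double Jacobiator ⟪a,b,c⟫_α := α₃⟪a,⟪b,c⟫⟫_L + τ_{(123)}α₃⟪b,⟪c,a⟫⟫_L + τ_{(132)}α₃⟪c,⟪a,b⟫⟫_L. If m(⟪a,b,c⟫_α) = m(⟪b,a,c⟫_α) for all a,b,c ∈ A, where m : A⊗A⊗A → A is multiplication of the three factors, then {a,b}_m := ⟪a,b⟫'⟪a,b⟫'' is a left Loday bracket on A (i.e. {a,{b,c}_m}_m = {{a,b}_m,c}_m + {b,{a,c}_m}_m for all a,b,c), and it descends to a Lie bracket on A/[A,A]. -/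
import Mathlib


open scoped TensorProduct

noncomputable section

/-- A (`k`-linear) `A`-bimodule-type structure on a `k`-module `M`,
given by a three-slot action `a · d · b`. -/
structure BimodOn (k A M : Type*) [CommSemiring k] [Ring A] [Algebra k A]
    [AddCommMonoid M] [Module k M] where
  act : A → M → A → M
  add_left : ∀ (a a' : A) (d : M) (b : A), act (a + a') d b = act a d b + act a' d b
  add_mid : ∀ (a : A) (d d' : M) (b : A), act a (d + d') b = act a d b + act a d' b
  add_right : ∀ (a : A) (d : M) (b b' : A), act a d (b + b') = act a d b + act a d b'
  smul_left : ∀ (c : k) (a : A) (d : M) (b : A), act (c • a) d b = c • act a d b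
  smul_mid : ∀ (c : k) (a : A) (d : M) (b : A), act a (c • d) b = c • act a d b
  smul_right : ∀ (c : k) (a : A) (d : M) (b : A), act a d (c • b) = c • act a d b
  act_one_one : ∀ d : M, act 1 d 1 = d
  act_mul : ∀ (a a' : A) (d : M) (b b' : A), act a (act a' d b') b = act (a * a') d (b' * b)

/-- An `A`-bimodule structure on `A ⊗[k] A`. -/
abbrev BimodStr (k A : Type*) [CommSemiring k] [Ring A] [Algebra k A] :=
  BimodOn k A (A ⊗[k] A)

section Defs

variable (k A : Type*) [CommSemiring k] [Ring A] [Algebra k A]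

/-- The swap automorphism `°` of `A ⊗[k] A`, `a ⊗ b ↦ b ⊗ a`. -/
def swapT : A ⊗[k] A →ₗ[k] A ⊗[k] A := (TensorProduct.comm k A A).toLinearMap

variable {k A}

namespace BimodOn

/-- The swap bimodule structure `a * d * b = (a · d° · b)°` associated with a
bimodule structure on `A ⊗[k] A`. -/
def star (S : BimodStr k A) (a : A) (d : A ⊗[k] A) (b : A) : A ⊗[k] A :=
  swapT k A (S.act a (swapT k A d) b)

/-- A bimodule structure on `A ⊗[k] A` is swap-commuting if it commutes with its
swap bimodule structure. -/
def SwapCommuting (S : BimodStr k A) : Prop :=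
  ∀ (a₁ a₂ b₁ b₂ : A) (d : A ⊗[k] A),
    S.act a₁ (S.star a₂ d b₂) b₁ = S.star a₂ (S.act a₁ d b₁) b₂

end BimodOn

end Defs

/-- A double bracket on `A` associated with a bimodule structure `S` on `A ⊗[k] A`
(with swap bimodule structure `S.star`). -/
structure DoubleBracket {k A : Type*} [CommSemiring k] [Ring A] [Algebra k A]
    (S : BimodStr k A) where
  br : A →ₗ[k] A →ₗ[k] A ⊗[k] A
  antisymm : ∀ a b : A, br a b = - swapT k A (br b a)
  leibniz_right : ∀ a b c : A, br a (b * c) = S.act b (br a c) 1 + S.act 1 (br a b) c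
  leibniz_left : ∀ a b c : A, br (b * c) a = S.star b (br c a) 1 + S.star 1 (br b a) c

section Taus

variable (k A : Type*) [CommSemiring k] [Ring A] [Algebra k A]

/-- `τ_{(123)}` on `A^{⊗3}`: `a ⊗ b ⊗ c ↦ c ⊗ a ⊗ b`. -/
def tau123 : (A ⊗[k] A) ⊗[k] A →ₗ[k] (A ⊗[k] A) ⊗[k] A :=
  ((TensorProduct.comm k (A ⊗[k] A) A).trans (TensorProduct.assoc k A A A).symm).toLinearMap

/-- `τ_{(132)}` on `A^{⊗3}`: `a ⊗ b ⊗ c ↦ b ⊗ c ⊗ a`. -/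
def tau132 : (A ⊗[k] A) ⊗[k] A →ₗ[k] (A ⊗[k] A) ⊗[k] A :=
  ((TensorProduct.assoc k A A A).trans (TensorProduct.comm k A (A ⊗[k] A))).toLinearMap

/-- `τ_{(12)}` on `A^{⊗3}`: `a ⊗ b ⊗ c ↦ b ⊗ a ⊗ c`. -/
def tau12 : (A ⊗[k] A) ⊗[k] A →ₗ[k] (A ⊗[k] A) ⊗[k] A :=
  (TensorProduct.congr (TensorProduct.comm k A A) (LinearEquiv.refl k A)).toLinearMap

variable {k A}

/-- `⟪a, -⟫_L : A ⊗ A → A ⊗ A ⊗ A`, `b₁ ⊗ b₂ ↦ ⟪a, b₁⟫ ⊗ b₂`. -/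
def trL (br : A →ₗ[k] A →ₗ[k] A ⊗[k] A) (a : A) :
    A ⊗[k] A →ₗ[k] (A ⊗[k] A) ⊗[k] A :=
  TensorProduct.map (br a) LinearMap.id

/-- The double Jacobiator of a bilinear operation `A × A → A ⊗ A`:
`⟪a,b,c⟫ = ⟪a,⟪b,c⟫⟫_L + τ_{(123)} ⟪b,⟪c,a⟫⟫_L + τ_{(132)} ⟪c,⟪a,b⟫⟫_L`. -/
def jac (br : A →ₗ[k] A →ₗ[k] A ⊗[k] A) (a b c : A) : (A ⊗[k] A) ⊗[k] A :=
  trL br a (br b c) + tau123 k A (trL br b (br c a)) + tau132 k A (trL br c (br a b))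

end Taus

end

/-- The `k`-span of commutators `[A,A]` in `A`. -/
def commSpan (k A : Type*) [CommSemiring k] [Ring A] [Algebra k A] : Submodule k A :=
  Submodule.span k {x : A | ∃ a b : A, x = a * b - b * a}

/-- The multiplication map `m ∘ ⟪-,-⟫ : A × A → A`, `{a,b}_m = ⟪a,b⟫'⟪a,b⟫''`. -/
noncomputable def brm {k A : Type*} [CommSemiring k] [Ring A] [Algebra k A]
    (br : A →ₗ[k] A →ₗ[k] A ⊗[k] A) (a b : A) : A :=
  LinearMap.mul' k A (br a b)

/-- Multiplication of the three tensor factors, `m : A^{⊗3} → A`. -/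
noncomputable def mulT3 (k A : Type*) [CommSemiring k] [Ring A] [Algebra k A] :
    (A ⊗[k] A) ⊗[k] A →ₗ[k] A :=
  (LinearMap.mul' k A).comp (TensorProduct.map (LinearMap.mul' k A) LinearMap.id)

/-- `α₃ = id ⊗ id ⊗ α` on `A^{⊗3}`. -/
noncomputable def alpha3 {k A : Type*} [CommSemiring k] [Ring A] [Algebra k A]
    (α : A ≃ₐ[k] A) : (A ⊗[k] A) ⊗[k] A →ₗ[k] (A ⊗[k] A) ⊗[k] A :=
  TensorProduct.map (LinearMap.id : A ⊗[k] A →ₗ[k] A ⊗[k] A) α.toLinearMap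

/-- The left `α`-twisted double Jacobiator
`⟪a,b,c⟫_α = α₃⟪a,⟪b,c⟫⟫_L + τ_{(123)} α₃⟪b,⟪c,a⟫⟫_L + τ_{(132)} α₃⟪c,⟪a,b⟫⟫_L`. -/
noncomputable def jacAlpha {k A : Type*} [CommSemiring k] [Ring A] [Algebra k A]
    (α : A ≃ₐ[k] A) (br : A →ₗ[k] A →ₗ[k] A ⊗[k] A) (a b c : A) :
    (A ⊗[k] A) ⊗[k] A :=
  alpha3 α (trL br a (br b c)) + tau123 k A (alpha3 α (trL br b (br c a)))
    + tau132 k A (alpha3 α (trL br c (br a b)))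

section AuxLemmas

variable {k A : Type*} [CommRing k] [Ring A] [Algebra k A]

lemma mul'_ltmul (s : A) (D : A ⊗[k] A) :
    LinearMap.mul' k A ((s ⊗ₜ[k] (1 : A)) * D) = s * LinearMap.mul' k A D := by
  induction D using TensorProduct.induction_on with
  | zero => simp
  | tmul p q => simp [Algebra.TensorProduct.tmul_mul_tmul, mul_assoc]
  | add x y hx hy => simp [mul_add, hx, hy]

lemma mul'_rtmul (t : A) (D : A ⊗[k] A) :
    LinearMap.mul' k A (D * ((1 : A) ⊗ₜ[k] t)) = LinearMap.mul' k A D * t := by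
  induction D using TensorProduct.induction_on with
  | zero => simp
  | tmul p q => simp [Algebra.TensorProduct.tmul_mul_tmul, mul_assoc]
  | add x y hx hy => simp [add_mul, hx, hy]

lemma mul'_sandwich (s : A) (D : A ⊗[k] A) :
    LinearMap.mul' k A (((1 : A) ⊗ₜ[k] s) * D)
      = LinearMap.mul' k A (D * (s ⊗ₜ[k] (1 : A))) := by
  induction D using TensorProduct.induction_on with
  | zero => simp
  | tmul p q => simp [Algebra.TensorProduct.tmul_mul_tmul, mul_assoc]
  | add x y hx hy => simp [mul_add, add_mul, hx, hy]

lemma swapT_swapT (d : A ⊗[k] A) : swapT k A (swapT k A d) = d := by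
  induction d using TensorProduct.induction_on with
  | zero => simp
  | tmul p q => simp [swapT]
  | add x y hx hy => simp [hx, hy]

lemma mulT3_tmul (D : A ⊗[k] A) (r : A) :
    mulT3 k A (D ⊗ₜ[k] r) = LinearMap.mul' k A D * r := by
  simp [mulT3]

lemma mulT3_tau123 (D : A ⊗[k] A) (r : A) :
    mulT3 k A (tau123 k A (D ⊗ₜ[k] r)) = r * LinearMap.mul' k A D := by
  induction D using TensorProduct.induction_on with
  | zero => simp
  | tmul p q => simp [tau123, mulT3, mul_assoc]
  | add x y hx hy => simp [TensorProduct.add_tmul, hx, hy, mul_add]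

lemma mulT3_tau132 (D : A ⊗[k] A) (r : A) :
    mulT3 k A (tau132 k A (D ⊗ₜ[k] r)) =
      LinearMap.mul' k A (swapT k A D * (r ⊗ₜ[k] (1 : A))) := by
  induction D using TensorProduct.induction_on with
  | zero => simp
  | tmul p q => simp [tau132, mulT3, swapT, Algebra.TensorProduct.tmul_mul_tmul]
  | add x y hx hy => simp [TensorProduct.add_tmul, add_mul, hx, hy]

/-- `Q a d = m(α₃(⟪a,d'⟫ ⊗ d''))`. -/
noncomputable def Qmap (α : A ≃ₐ[k] A) (br : A →ₗ[k] A →ₗ[k] A ⊗[k] A) (a : A) :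
    A ⊗[k] A →ₗ[k] A := mulT3 k A ∘ₗ alpha3 α ∘ₗ trL br a

/-- `R a d = m(τ₍₁₂₃₎ α₃(⟪a,d'⟫ ⊗ d''))`. -/
noncomputable def Rmap (α : A ≃ₐ[k] A) (br : A →ₗ[k] A →ₗ[k] A ⊗[k] A) (a : A) :
    A ⊗[k] A →ₗ[k] A := mulT3 k A ∘ₗ tau123 k A ∘ₗ alpha3 α ∘ₗ trL br a

/-- `W a d = m(τ₍₁₃₂₎ α₃(⟪a,d'⟫ ⊗ d''))`. -/
noncomputable def Wmap (α : A ≃ₐ[k] A) (br : A →ₗ[k] A →ₗ[k] A ⊗[k] A) (a : A) :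
    A ⊗[k] A →ₗ[k] A := mulT3 k A ∘ₗ tau132 k A ∘ₗ alpha3 α ∘ₗ trL br a

noncomputable def Pmap (α : A ≃ₐ[k] A) (br : A →ₗ[k] A →ₗ[k] A ⊗[k] A) (a : A) :
    A ⊗[k] A →ₗ[k] A := Rmap α br a ∘ₗ swapT k A

noncomputable def Umap (α : A ≃ₐ[k] A) (br : A →ₗ[k] A →ₗ[k] A ⊗[k] A) (a : A) :
    A ⊗[k] A →ₗ[k] A := -(Wmap α br a ∘ₗ swapT k A)

variable (α : A ≃ₐ[k] A) (br : A →ₗ[k] A →ₗ[k] A ⊗[k] A)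

lemma Qmap_tmul (a x y : A) :
    Qmap α br a (x ⊗ₜ[k] y) = LinearMap.mul' k A (br a x) * α y := by
  simp [Qmap, trL, alpha3, mulT3_tmul]

lemma Rmap_tmul (a x y : A) :
    Rmap α br a (x ⊗ₜ[k] y) = α y * LinearMap.mul' k A (br a x) := by
  simp [Rmap, trL, alpha3, mulT3_tau123]

lemma Wmap_tmul (a x y : A) :
    Wmap α br a (x ⊗ₜ[k] y)
      = LinearMap.mul' k A (swapT k A (br a x) * ((α y) ⊗ₜ[k] (1 : A))) := by
  simp [Wmap, trL, alpha3, mulT3_tau132]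

lemma Pmap_tmul (a x y : A) :
    Pmap α br a (x ⊗ₜ[k] y) = α x * LinearMap.mul' k A (br a y) := by
  simp [Pmap, swapT, Rmap_tmul]

lemma Umap_tmul (a x y : A) :
    Umap α br a (x ⊗ₜ[k] y)
      = - LinearMap.mul' k A (swapT k A (br a y) * ((α x) ⊗ₜ[k] (1 : A))) := by
  simp [Umap, swapT, Wmap_tmul]

end AuxLemmas

section KeyLemmas

variable {k A : Type*} [CommRing k] [Ring A] [Algebra k A]
variable (α : A ≃ₐ[k] A) {S : BimodStr k A}
variable (hS : ∀ (a b : A) (d : A ⊗[k] A),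
    S.act a d b = ((α a) ⊗ₜ[k] (1 : A)) * d * ((1 : A) ⊗ₜ[k] (α b)))
variable (D : DoubleBracket S)

include hS in
lemma star_eq (s t : A) (d : A ⊗[k] A) :
    S.star s d t = ((1 : A) ⊗ₜ[k] α s) * d * ((α t) ⊗ₜ[k] (1 : A)) := by
  unfold BimodOn.star
  rw [hS]
  induction d using TensorProduct.induction_on with
  | zero => simp
  | tmul p q => simp [swapT, Algebra.TensorProduct.tmul_mul_tmul]
  | add x y hx hy => simp only [map_add, mul_add, add_mul, hx, hy]

include hS in
lemma keyK1 (a : A) (d : A ⊗[k] A) :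
    LinearMap.mul' k A (D.br a (LinearMap.mul' k A d))
      = Qmap α D.br a d + Pmap α D.br a d := by
  induction d using TensorProduct.induction_on with
  | zero => simp
  | tmul x y =>
      rw [LinearMap.mul'_apply, D.leibniz_right a x y, hS, hS]
      simp only [map_one, ← Algebra.TensorProduct.one_def, mul_one, one_mul]
      rw [map_add, mul'_ltmul, mul'_rtmul, Qmap_tmul, Pmap_tmul]
      exact add_comm _ _
  | add x y hx hy => simp only [map_add, hx, hy]; abel

include hS in
lemma keyK2 (c : A) (d : A ⊗[k] A) :
    LinearMap.mul' k A (D.br (LinearMap.mul' k A d) c)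
      = Umap α D.br c d + Umap α D.br c (swapT k A d) := by
  induction d using TensorProduct.induction_on with
  | zero => simp
  | tmul x y =>
      rw [LinearMap.mul'_apply, D.leibniz_left c x y, star_eq α hS, star_eq α hS]
      simp only [map_one, ← Algebra.TensorProduct.one_def, mul_one, one_mul]
      rw [map_add, mul'_sandwich]
      have h1 : swapT k A (D.br c y) = - D.br y c := by rw [D.antisymm y c, neg_neg]
      have h2 : swapT k A (D.br c x) = - D.br x c := by rw [D.antisymm x c, neg_neg]
      have hsw : swapT k A (x ⊗ₜ[k] y) = y ⊗ₜ[k] x := by simp [swapT]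
      rw [hsw, Umap_tmul, Umap_tmul, h1, h2, neg_mul, neg_mul, map_neg, map_neg,
        neg_neg, neg_neg]
  | add x y hx hy =>
      simp only [map_add, LinearMap.add_apply, hx, hy]; abel

lemma mul'_sub_swap_mem (d : A ⊗[k] A) :
    LinearMap.mul' k A d - LinearMap.mul' k A (swapT k A d) ∈ commSpan k A := by
  induction d using TensorProduct.induction_on with
  | zero => simp [commSpan]
  | tmul x y =>
      simp only [swapT, LinearEquiv.coe_coe, TensorProduct.comm_tmul, LinearMap.mul'_apply]
      exact Submodule.subset_span ⟨x, y, rfl⟩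
  | add x y hx hy =>
      simp only [map_add]
      have : LinearMap.mul' k A x + LinearMap.mul' k A y
          - (LinearMap.mul' k A (swapT k A x) + LinearMap.mul' k A (swapT k A y))
          = (LinearMap.mul' k A x - LinearMap.mul' k A (swapT k A x))
            + (LinearMap.mul' k A y - LinearMap.mul' k A (swapT k A y)) := by abel
      rw [this]
      exact add_mem hx hy

end KeyLemmas

/-- Proposition `Out-Lod`: for a double bracket associated with the
`α`-twisted outer bimodule structure with
`m ∘ ⟪-,-,-⟫_α - m ∘ ⟪-,-,-⟫_α ∘ τ_{(12)} = 0`, the map `{a,b}_m = ⟪a,b⟫'⟪a,b⟫''` is a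
left Loday bracket on `A` and descends to a Lie bracket on `A/[A,A]`. -/
theorem twisted_outer_left_loday
    {k A : Type*} [Field k] [CharZero k] [Ring A] [Algebra k A]
    (α : A ≃ₐ[k] A)
    (S : BimodStr k A)
    (hS : ∀ (a b : A) (d : A ⊗[k] A),
      S.act a d b = ((α a) ⊗ₜ[k] (1 : A)) * d * ((1 : A) ⊗ₜ[k] (α b)))
    (D : DoubleBracket S)
    (hm : ∀ a b c : A, mulT3 k A (jacAlpha α D.br a b c) = mulT3 k A (jacAlpha α D.br b a c)) :
    (∀ a b c : A, brm D.br a (brm D.br b c)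
      = brm D.br (brm D.br a b) c + brm D.br b (brm D.br a c)) ∧
    (∃ L : (A ⧸ commSpan k A) →ₗ[k] (A ⧸ commSpan k A) →ₗ[k] (A ⧸ commSpan k A),
      (∀ a b : A, L (Submodule.Quotient.mk a) (Submodule.Quotient.mk b)
        = Submodule.Quotient.mk (brm D.br a b)) ∧
      (∀ x y, L x y = - L y x) ∧
      (∀ x y z, L x (L y z) = L (L x y) z + L y (L x z))) := by
  have loday : ∀ a b c : A, brm D.br a (brm D.br b c)
      = brm D.br (brm D.br a b) c + brm D.br b (brm D.br a c) := by
    intro a b c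
    have e' : Qmap α D.br a (D.br b c) + Rmap α D.br b (D.br c a)
          + Wmap α D.br c (D.br a b)
        = Qmap α D.br b (D.br a c) + Rmap α D.br a (D.br c b)
          + Wmap α D.br c (D.br b a) := by
      simpa [jacAlpha, Qmap, Rmap, Wmap, map_add, LinearMap.comp_apply] using hm a b c
    have hca : D.br c a = - swapT k A (D.br a c) := D.antisymm c a
    have hcb : D.br c b = - swapT k A (D.br b c) := D.antisymm c b
    rw [hca, hcb, map_neg, map_neg] at e'
    have hPb : Rmap α D.br b (swapT k A (D.br a c)) = Pmap α D.br b (D.br a c) := rfl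
    have hPa : Rmap α D.br a (swapT k A (D.br b c)) = Pmap α D.br a (D.br b c) := rfl
    rw [hPb, hPa] at e'
    -- the three brackets in the Loday identity
    show LinearMap.mul' k A (D.br a (LinearMap.mul' k A (D.br b c)))
        = LinearMap.mul' k A (D.br (LinearMap.mul' k A (D.br a b)) c)
          + LinearMap.mul' k A (D.br b (LinearMap.mul' k A (D.br a c)))
    rw [keyK1 α hS D a (D.br b c), keyK1 α hS D b (D.br a c), keyK2 α hS D c (D.br a b)]
    have hUW : ∀ d : A ⊗[k] A, Umap α D.br c d = - Wmap α D.br c (swapT k A d) := by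
      intro d; rfl
    have hba : swapT k A (D.br a b) = - D.br b a := by rw [D.antisymm b a, neg_neg]
    have hab : swapT k A (swapT k A (D.br a b)) = D.br a b := swapT_swapT _
    rw [hUW, hUW, hab, hba, map_neg, neg_neg]
    set Qa := Qmap α D.br a (D.br b c)
    set Pa := Pmap α D.br a (D.br b c)
    set Qb := Qmap α D.br b (D.br a c)
    set Pb := Pmap α D.br b (D.br a c)
    set Wab := Wmap α D.br c (D.br a b)
    set Wba := Wmap α D.br c (D.br b a)
    -- e' : Qa - Pb + Wab = Qb - Pa + Wba
    -- goal : Qa + Pa = (- Wab + Wba) + (Qb + Pb)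
    have h2 : Qa + Pa - ((Wba + - Wab) + (Qb + Pb))
        = (Qa + - Pb + Wab) - (Qb + - Pa + Wba) := by abel
    rw [e', sub_self] at h2
    exact sub_eq_zero.mp h2
  refine ⟨loday, ?_⟩
  set I := commSpan k A with hI
  -- right-slot invariance
  have hBa : ∀ a : A, I ≤ I.comap (LinearMap.mul' k A ∘ₗ D.br a) := by
    intro a
    rw [hI, commSpan]
    refine Submodule.span_le.mpr ?_
    rintro x ⟨u, v, rfl⟩
    simp only [SetLike.mem_coe, Submodule.mem_comap, LinearMap.comp_apply, map_sub]
    have h1 : LinearMap.mul' k A (D.br a (u * v))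
        = LinearMap.mul' k A (D.br a u) * α v + α u * LinearMap.mul' k A (D.br a v) := by
      have := keyK1 α hS D a (u ⊗ₜ[k] v)
      rw [LinearMap.mul'_apply] at this
      rw [this, Qmap_tmul, Pmap_tmul]
    have h2 : LinearMap.mul' k A (D.br a (v * u))
        = LinearMap.mul' k A (D.br a v) * α u + α v * LinearMap.mul' k A (D.br a u) := by
      have := keyK1 α hS D a (v ⊗ₜ[k] u)
      rw [LinearMap.mul'_apply] at this
      rw [this, Qmap_tmul, Pmap_tmul]
    rw [h1, h2]
    have h3 : LinearMap.mul' k A (D.br a u) * α v + α u * LinearMap.mul' k A (D.br a v)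
        - (LinearMap.mul' k A (D.br a v) * α u + α v * LinearMap.mul' k A (D.br a u))
        = (LinearMap.mul' k A (D.br a u) * α v - α v * LinearMap.mul' k A (D.br a u))
          + (α u * LinearMap.mul' k A (D.br a v)
              - LinearMap.mul' k A (D.br a v) * α u) := by abel
    rw [h3]
    exact add_mem (Submodule.subset_span ⟨_, _, rfl⟩) (Submodule.subset_span ⟨_, _, rfl⟩)
  -- left-slot invariance (in fact vanishing)
  have hBb : ∀ b : A, I ≤ LinearMap.ker (LinearMap.mul' k A ∘ₗ D.br.flip b) := by
    intro b
    rw [hI, commSpan]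
    refine Submodule.span_le.mpr ?_
    rintro x ⟨u, v, rfl⟩
    simp only [SetLike.mem_coe, LinearMap.mem_ker, LinearMap.comp_apply, map_sub,
      LinearMap.flip_apply]
    have h1 : LinearMap.mul' k A (D.br (u * v) b)
        = Umap α D.br b (u ⊗ₜ[k] v) + Umap α D.br b (v ⊗ₜ[k] u) := by
      have := keyK2 α hS D b (u ⊗ₜ[k] v)
      rw [LinearMap.mul'_apply] at this
      have hsw : swapT k A (u ⊗ₜ[k] v) = v ⊗ₜ[k] u := by simp [swapT]
      rw [this, hsw]
    have h2 : LinearMap.mul' k A (D.br (v * u) b)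
        = Umap α D.br b (v ⊗ₜ[k] u) + Umap α D.br b (u ⊗ₜ[k] v) := by
      have := keyK2 α hS D b (v ⊗ₜ[k] u)
      rw [LinearMap.mul'_apply] at this
      have hsw : swapT k A (v ⊗ₜ[k] u) = u ⊗ₜ[k] v := by simp [swapT]
      rw [this, hsw]
    rw [h1, h2, add_comm, sub_self]
  -- build the quotient bracket
  let B : A →ₗ[k] A →ₗ[k] A ⧸ I := D.br.compr₂ (I.mkQ ∘ₗ LinearMap.mul' k A)
  have hB : ∀ a b : A, B a b = Submodule.Quotient.mk (LinearMap.mul' k A (D.br a b)) :=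
    fun a b => rfl
  have hker1 : ∀ a : A, I ≤ LinearMap.ker (B a) := by
    intro a x hx
    rw [LinearMap.mem_ker, hB, Submodule.Quotient.mk_eq_zero]
    exact hBa a hx
  let F : A →ₗ[k] (A ⧸ I) →ₗ[k] A ⧸ I :=
    { toFun := fun a => I.liftQ (B a) (hker1 a)
      map_add' := by
        intro a a'
        refine LinearMap.ext fun x => ?_
        obtain ⟨y, rfl⟩ := Submodule.Quotient.mk_surjective I x
        simp [Submodule.liftQ_apply, map_add]
      map_smul' := by
        intro c a
        refine LinearMap.ext fun x => ?_
        obtain ⟨y, rfl⟩ := Submodule.Quotient.mk_surjective I x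
        simp [Submodule.liftQ_apply, map_smul] }
  have hF : ∀ (a : A) (x : A ⧸ I), F a x = I.liftQ (B a) (hker1 a) x := fun a x => rfl
  have hkerF : I ≤ LinearMap.ker F := by
    intro x hx
    rw [LinearMap.mem_ker]
    refine LinearMap.ext fun y => ?_
    obtain ⟨b, rfl⟩ := Submodule.Quotient.mk_surjective I y
    rw [hF, Submodule.liftQ_apply, hB, LinearMap.zero_apply]
    rw [Submodule.Quotient.mk_eq_zero]
    have := hBb b hx
    rw [LinearMap.mem_ker, LinearMap.comp_apply, LinearMap.flip_apply] at this
    rw [this]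
    exact zero_mem I
  refine ⟨I.liftQ F hkerF, ?_, ?_, ?_⟩
  · intro a b
    rw [Submodule.liftQ_apply, hF, Submodule.liftQ_apply, hB]
    rfl
  · intro x y
    obtain ⟨a, rfl⟩ := Submodule.Quotient.mk_surjective I x
    obtain ⟨b, rfl⟩ := Submodule.Quotient.mk_surjective I y
    rw [Submodule.liftQ_apply, hF, Submodule.liftQ_apply, hB,
      Submodule.liftQ_apply, hF, Submodule.liftQ_apply, hB]
    rw [eq_neg_iff_add_eq_zero, ← Submodule.Quotient.mk_add, Submodule.Quotient.mk_eq_zero]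
    have hsym : LinearMap.mul' k A (D.br a b) + LinearMap.mul' k A (D.br b a)
        = LinearMap.mul' k A (D.br a b)
          - LinearMap.mul' k A (swapT k A (D.br a b)) := by
      rw [D.antisymm b a, map_neg]
      abel
    rw [hsym]
    exact mul'_sub_swap_mem _
  · intro x y z
    obtain ⟨a, rfl⟩ := Submodule.Quotient.mk_surjective I x
    obtain ⟨b, rfl⟩ := Submodule.Quotient.mk_surjective I y
    obtain ⟨c, rfl⟩ := Submodule.Quotient.mk_surjective I z
    have key : ∀ u v : A,
        (I.liftQ F hkerF) (Submodule.Quotient.mk u) (Submodule.Quotient.mk v)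
          = Submodule.Quotient.mk (brm D.br u v) := by
      intro u v
      rw [Submodule.liftQ_apply, hF, Submodule.liftQ_apply, hB]
      rfl
    rw [key b c, key a c, key a b, key a (brm D.br b c), key (brm D.br a b) c,
      key b (brm D.br a c), ← Submodule.Quotient.mk_add]
    exact congrArg _ (loday a b c)
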